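/- Let Λ be a nonnegative random variable with finite fourth moment, mean μ > 0, variance v, third cumulant k₃, and fourth cumulant k₄, and let Y | Λ ~ Poisson(Λ). Define η := (Y − μ)² − Y. Then E[η] = v and Var(η) = 2μ² + 4μv + 2v² + 2v + 4k₃ + k₄. -/

import Mathlib

/-!
Given `Λ = r`, `Y` is Poisson with factorial moments `E[Y(Y-1)⋯(Y-k+1)] = r ^ k`. Expanding
`(Y - μ)²` and `η²` in the falling-factorial basis turns their conditional means into polynomials
in `Λ`, namely `(Λ - μ)² + Λ` and `D⁴ + 4D³ + (4μ + 2)D² + 4μD + 2μ²` with `D = Λ - μ`.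
Taking expectations, `E[η] = E[(Y - μ)²] - E[Y] = v` and
`E[η²] = (k₄ + 3v²) + 4k₃ + (4μ + 2)v + 2μ²`, so `Var(η) = E[η²] - v²` is the stated polynomial.
-/

open MeasureTheory ProbabilityTheory
open scoped NNReal

/-- Third cumulant: the third central moment. -/
noncomputable def cum3 {Ω : Type*} [MeasurableSpace Ω] (X : Ω → ℝ) (μ : Measure Ω) : ℝ :=
  ProbabilityTheory.centralMoment X 3 μ

/-- Fourth cumulant: fourth central moment minus three times the squared variance. -/
noncomputable def cum4 {Ω : Type*} [MeasurableSpace Ω] (X : Ω → ℝ) (μ : Measure Ω) : ℝ :=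
  ProbabilityTheory.centralMoment X 4 μ - 3 * (ProbabilityTheory.variance X μ) ^ 2

open Real Nat
open scoped ENNReal

section Poisson

variable (r : ℝ≥0)

lemma hasSum_descFactorial_poissonMeasure (k : ℕ) :
    HasSum (fun n : ℕ => exp (-r) * r ^ n / n ! * (n.descFactorial k : ℝ)) ((r : ℝ) ^ k) := by
  have hshift : (fun m => exp (-r) * r ^ (m + k) / (m + k) ! * ((m + k).descFactorial k : ℝ))
      = fun m => (r : ℝ) ^ k * (exp (-r) * r ^ m / m !) := by
    funext m
    have h := congrArg (Nat.cast (R := ℝ)) (Nat.factorial_mul_descFactorial (Nat.le_add_left k m))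
    simp only [Nat.add_sub_cancel, Nat.cast_mul] at h
    field_simp
    rw [← h, pow_add]
    ring
  have hlow : ∑ i ∈ Finset.range k, exp (-r) * r ^ i / i ! * (i.descFactorial k : ℝ) = 0 :=
    Finset.sum_eq_zero fun i hi => by
      rw [Nat.descFactorial_of_lt (Finset.mem_range.1 hi)]; simp
  rw [← hasSum_nat_add_iff' k, hlow, sub_zero, hshift]
  simpa using (hasSum_one_poissonMeasure r).mul_left ((r : ℝ) ^ k)

lemma integrable_descFactorial_poissonMeasure (k : ℕ) :
    Integrable (fun n : ℕ => (n.descFactorial k : ℝ)) (poissonMeasure r) := by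
  rw [integrable_poissonMeasure_iff]
  simpa using (hasSum_descFactorial_poissonMeasure r k).summable

lemma integral_descFactorial_poissonMeasure (k : ℕ) :
    ∫ n, (n.descFactorial k : ℝ) ∂poissonMeasure r = (r : ℝ) ^ k :=
  (hasSum_integral_poissonMeasure (integrable_descFactorial_poissonMeasure r k)).unique
    (by simpa using hasSum_descFactorial_poissonMeasure r k)

lemma integrable_and_integral_poissonMeasure_of_eq_sum_descFactorial {m : ℕ} (a : Fin m → ℝ)
    {g : ℕ → ℝ} (hg : ∀ n, g n = ∑ i, a i * n.descFactorial i) :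
    Integrable g (poissonMeasure r) ∧
      ∫ n, g n ∂poissonMeasure r = ∑ i, a i * (r : ℝ) ^ (i : ℕ) := by
  have hint i : Integrable (fun n : ℕ => a i * n.descFactorial i) (poissonMeasure r) :=
    (integrable_descFactorial_poissonMeasure r i).const_mul (a i)
  rw [funext hg]
  refine ⟨integrable_finsetSum _ fun i _ => hint i, ?_⟩
  rw [integral_finsetSum _ fun i _ => hint i]
  simp only [integral_const_mul, integral_descFactorial_poissonMeasure]

lemma integrable_and_integral_cast_poissonMeasure :
    Integrable (fun n : ℕ => (n : ℝ)) (poissonMeasure r) ∧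
      ∫ n, (n : ℝ) ∂poissonMeasure r = r :=
  ⟨by simpa using integrable_descFactorial_poissonMeasure r 1,
    by simpa using integral_descFactorial_poissonMeasure r 1⟩

variable (c : ℝ)

lemma integrable_and_integral_sub_sq_poissonMeasure :
    Integrable (fun n : ℕ => ((n : ℝ) - c) ^ 2) (poissonMeasure r) ∧
      ∫ n, ((n : ℝ) - c) ^ 2 ∂poissonMeasure r = (r - c) ^ 2 + (r - c) + c := by
  obtain ⟨hint, hval⟩ := integrable_and_integral_poissonMeasure_of_eq_sum_descFactorial r
    (g := fun n => ((n : ℝ) - c) ^ 2) ![c ^ 2, 1 - 2 * c, 1] fun n => by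
      simp only [Fin.sum_univ_succ, Fin.sum_univ_zero, Matrix.cons_val_zero, Matrix.cons_val_succ,
        Fin.val_zero, Fin.val_succ, ← descPochhammer_eval_eq_descFactorial,
        descPochhammer_succ_eval, descPochhammer_zero, Polynomial.eval_one]
      push_cast
      ring
  refine ⟨hint, hval.trans ?_⟩
  simp only [Fin.sum_univ_succ, Fin.sum_univ_zero, Matrix.cons_val_zero, Matrix.cons_val_succ,
    Fin.val_zero, Fin.val_succ]
  ring

lemma integrable_and_integral_sub_sq_sub_sq_poissonMeasure :
    Integrable (fun n : ℕ => (((n : ℝ) - c) ^ 2 - n) ^ 2) (poissonMeasure r) ∧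
      ∫ n, (((n : ℝ) - c) ^ 2 - n) ^ 2 ∂poissonMeasure r
        = (r - c) ^ 4 + 4 * (r - c) ^ 3 + (4 * c + 2) * (r - c) ^ 2 + 4 * c * (r - c)
          + 2 * c ^ 2 := by
  obtain ⟨hint, hval⟩ := integrable_and_integral_poissonMeasure_of_eq_sum_descFactorial r
    (g := fun n => (((n : ℝ) - c) ^ 2 - n) ^ 2)
    ![c ^ 4, 4 * c ^ 2 - 4 * c ^ 3, 2 - 8 * c + 6 * c ^ 2, 4 - 4 * c, 1] fun n => by
      simp only [Fin.sum_univ_succ, Fin.sum_univ_zero, Matrix.cons_val_zero, Matrix.cons_val_succ,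
        Fin.val_zero, Fin.val_succ, ← descPochhammer_eval_eq_descFactorial,
        descPochhammer_succ_eval, descPochhammer_zero, Polynomial.eval_one]
      push_cast
      ring
  refine ⟨hint, hval.trans ?_⟩
  simp only [Fin.sum_univ_succ, Fin.sum_univ_zero, Matrix.cons_val_zero, Matrix.cons_val_succ,
    Fin.val_zero, Fin.val_succ]
  ring

end Poisson

section CondDistrib

variable {Ω β γ : Type*} [MeasurableSpace Ω] [MeasurableSpace β] [MeasurableSpace γ]
  [StandardBorelSpace γ] [Nonempty γ] {P : Measure Ω} [IsFiniteMeasure P] {X : Ω → β} {Y : Ω → γ}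

lemma lintegral_comp_eq_lintegral_condDistrib (hX : Measurable X) (hY : Measurable Y)
    {g : γ → ℝ≥0∞} (hg : Measurable g) :
    ∫⁻ ω, g (Y ω) ∂P = ∫⁻ ω, ∫⁻ y, g y ∂condDistrib Y X P (X ω) ∂P := by
  rw [← lintegral_map hg hY, ← condDistrib_comp_map hX.aemeasurable hY.aemeasurable,
    Measure.lintegral_bind (Kernel.aemeasurable _) hg.aemeasurable,
    lintegral_map hg.lintegral_kernel hX]

/- For `g ≥ 0` the tower property follows from Tonelli, with no integrability assumption on the
joint law of `(X, Y)`. -/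
lemma integrable_and_integral_comp_eq_integral_condDistrib (hX : Measurable X) (hY : Measurable Y)
    {g : γ → ℝ} (hgm : Measurable g) (hg : 0 ≤ g)
    (hint : ∀ᵐ ω ∂P, Integrable g (condDistrib Y X P (X ω)))
    (hint' : Integrable (fun ω => ∫ y, g y ∂condDistrib Y X P (X ω)) P) :
    Integrable (fun ω => g (Y ω)) P ∧
      ∫ ω, g (Y ω) ∂P = ∫ ω, ∫ y, g y ∂condDistrib Y X P (X ω) ∂P := by
  have hlin : ∫⁻ ω, ENNReal.ofReal (g (Y ω)) ∂P
      = ENNReal.ofReal (∫ ω, ∫ y, g y ∂condDistrib Y X P (X ω) ∂P) := by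
    rw [lintegral_comp_eq_lintegral_condDistrib hX hY hgm.ennreal_ofReal,
      ofReal_integral_eq_lintegral_ofReal hint' (ae_of_all _ fun ω => integral_nonneg hg)]
    refine lintegral_congr_ae ?_
    filter_upwards [hint] with ω hω
    exact (ofReal_integral_eq_lintegral_ofReal hω (ae_of_all _ hg)).symm
  have hsm : AEStronglyMeasurable (fun ω => g (Y ω)) P := (hgm.comp hY).aestronglyMeasurable
  have hnonneg : 0 ≤ᵐ[P] fun ω => g (Y ω) := ae_of_all _ fun ω => hg (Y ω)
  refine ⟨⟨hsm, (hasFiniteIntegral_iff_ofReal hnonneg).2 (hlin ▸ ENNReal.ofReal_lt_top)⟩, ?_⟩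
  rw [integral_eq_lintegral_of_nonneg_ae hnonneg hsm, hlin,
    ENNReal.toReal_ofReal (integral_nonneg fun ω => integral_nonneg hg)]

end CondDistrib

section MixedPoisson

variable {Ω : Type*} [MeasurableSpace Ω] {P : Measure Ω} [IsProbabilityMeasure P]
  {Λ : Ω → ℝ≥0} {Y : Ω → ℕ}

lemma integrable_and_integral_comp_of_condDistrib_eq_poissonMeasure
    (hΛ : Measurable Λ) (hY : Measurable Y)
    (hcond : ∀ᵐ ω ∂P, condDistrib Y Λ P (Λ ω) = poissonMeasure (Λ ω))
    {g : ℕ → ℝ} (hg : 0 ≤ g) {p : ℝ≥0 → ℝ}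
    (hgp : ∀ r, Integrable g (poissonMeasure r) ∧ ∫ n, g n ∂poissonMeasure r = p r)
    (hp : Integrable (fun ω => p (Λ ω)) P) :
    Integrable (fun ω => g (Y ω)) P ∧ ∫ ω, g (Y ω) ∂P = ∫ ω, p (Λ ω) ∂P := by
  have hcondp : (fun ω => ∫ n, g n ∂condDistrib Y Λ P (Λ ω)) =ᵐ[P] fun ω => p (Λ ω) := by
    filter_upwards [hcond] with ω hω
    rw [hω, (hgp _).2]
  obtain ⟨hgY, hgY_eq⟩ := integrable_and_integral_comp_eq_integral_condDistrib hΛ hY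
    (g := g) .of_discrete hg (by filter_upwards [hcond] with ω hω; rw [hω]; exact (hgp _).1)
    (hp.congr hcondp.symm)
  exact ⟨hgY, hgY_eq.trans (integral_congr_ae hcondp)⟩

end MixedPoisson

section CentralMoments

variable {Ω : Type*} [MeasurableSpace Ω] {P : Measure Ω} {X : Ω → ℝ}

lemma MeasureTheory.MemLp.integrable_pow_of_le [IsFiniteMeasure P] {p : ℕ} (hX : MemLp X p P)
    {k : ℕ} (hk : k ≤ p) : Integrable (fun ω => X ω ^ k) P := by
  have h := (hX.mono_exponent (p := k) (mod_cast hk)).integrable_norm_pow'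
  exact (integrable_norm_iff ((hX.aestronglyMeasurable).pow k)).1 (by simpa [norm_pow] using h)

lemma integrable_and_integral_quartic_sub_integral [IsProbabilityMeasure P] (hX : MemLp X 4 P)
    (a b c d e : ℝ) :
    Integrable (fun ω => a * (X ω - P[X]) ^ 4 + b * (X ω - P[X]) ^ 3 + c * (X ω - P[X]) ^ 2
      + d * (X ω - P[X]) + e) P ∧
    ∫ ω, (a * (X ω - P[X]) ^ 4 + b * (X ω - P[X]) ^ 3 + c * (X ω - P[X]) ^ 2
      + d * (X ω - P[X]) + e) ∂P
      = a * centralMoment X 4 P + b * centralMoment X 3 P + c * variance X P + e := by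
  have hD : MemLp (fun ω => X ω - P[X]) 4 P := hX.sub (memLp_const _)
  have h1 : Integrable (fun ω => X ω - P[X]) P := hD.integrable (by norm_num)
  have h2 := hD.integrable_pow_of_le (k := 2) (by norm_num)
  have h3 := hD.integrable_pow_of_le (k := 3) (by norm_num)
  have h4 := hD.integrable_pow_of_le (k := 4) (by norm_num)
  have hmean : ∫ ω, (X ω - P[X]) ∂P = 0 := by
    rw [integral_sub (hX.integrable (by norm_num)) (integrable_const _)]
    simp only [integral_const, probReal_univ, smul_eq_mul, one_mul, sub_self]
  refine ⟨by fun_prop, ?_⟩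
  rw [integral_add (by fun_prop) (by fun_prop), integral_add (by fun_prop) (by fun_prop),
    integral_add (by fun_prop) (by fun_prop), integral_add (by fun_prop) (by fun_prop),
    variance_eq_integral hX.aestronglyMeasurable.aemeasurable]
  simp [integral_const_mul, hmean, centralMoment]

end CentralMoments

theorem mixed_poisson_eta_mean_var_general
    {Ω : Type*} [MeasurableSpace Ω] {P : Measure Ω} [IsProbabilityMeasure P]
    (Λ : Ω → ℝ≥0) (Y : Ω → ℕ) (hΛ : Measurable Λ) (hY : Measurable Y)
    (hmom : MemLp (fun ω => (Λ ω : ℝ)) 4 P)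
    (hcond : ∀ᵐ ω ∂P, condDistrib Y Λ P (Λ ω) = poissonMeasure (Λ ω)) :
    (∫ ω, (((Y ω : ℝ) - ∫ ω', (Λ ω' : ℝ) ∂P) ^ 2 - (Y ω : ℝ)) ∂P)
        = variance (fun ω => (Λ ω : ℝ)) P ∧
    variance (fun ω => ((Y ω : ℝ) - ∫ ω', (Λ ω' : ℝ) ∂P) ^ 2 - (Y ω : ℝ)) P
        = 2 * (∫ ω, (Λ ω : ℝ) ∂P) ^ 2
          + 4 * (∫ ω, (Λ ω : ℝ) ∂P) * variance (fun ω => (Λ ω : ℝ)) P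
          + 2 * (variance (fun ω => (Λ ω : ℝ)) P) ^ 2
          + 2 * variance (fun ω => (Λ ω : ℝ)) P
          + 4 * cum3 (fun ω => (Λ ω : ℝ)) P
          + cum4 (fun ω => (Λ ω : ℝ)) P := by
  set m := ∫ ω, (Λ ω : ℝ) ∂P
  have hq := integrable_and_integral_quartic_sub_integral hmom
  obtain ⟨hsqΛ, hsqΛ_eq⟩ := hq 0 0 1 1 m
  obtain ⟨hquartΛ, hquartΛ_eq⟩ := hq 1 4 (4 * m + 2) (4 * m) (2 * m ^ 2)
  simp only [zero_mul, zero_add, one_mul] at hsqΛ hsqΛ_eq hquartΛ hquartΛ_eq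
  have transfer {g p} :=
    integrable_and_integral_comp_of_condDistrib_eq_poissonMeasure hΛ hY hcond (g := g) (p := p)
  obtain ⟨hY_int, hY_eq⟩ := transfer (fun n => n.cast_nonneg)
    (integrable_and_integral_cast_poissonMeasure) (hmom.integrable (by norm_num))
  obtain ⟨hsq, hsq_eq⟩ := transfer (fun n => sq_nonneg ((n : ℝ) - m))
    (integrable_and_integral_sub_sq_poissonMeasure · m) hsqΛ
  obtain ⟨hη2, hη2_eq⟩ := transfer (fun n => sq_nonneg (((n : ℝ) - m) ^ 2 - n))
    (integrable_and_integral_sub_sq_sub_sq_poissonMeasure · m) hquartΛ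
  have hmean : ∫ ω, (((Y ω : ℝ) - m) ^ 2 - Y ω) ∂P = variance (fun ω => (Λ ω : ℝ)) P := by
    rw [integral_sub hsq hY_int, hsq_eq, hsqΛ_eq, hY_eq]
    ring
  have hη : MemLp (fun ω => ((Y ω : ℝ) - m) ^ 2 - Y ω) 2 P :=
    (memLp_two_iff_integrable_sq (by fun_prop)).2 hη2
  refine ⟨hmean, ?_⟩
  rw [variance_eq_sub hη]
  simp only [Pi.pow_apply]
  rw [hmean, hη2_eq, hquartΛ_eq, cum3, cum4]
  ring

/-- For the mixed-Poisson model `Y | Λ ~ Poisson(Λ)` with `E[Λ] = μ > 0`,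
`Var(Λ) = v`, third and fourth cumulants `k₃, k₄` of `Λ`, the Poisson-corrected
squared residual `η = (Y − μ)² − Y` satisfies `E[η] = v` and
`Var(η) = 2μ² + 4μv + 2v² + 2v + 4k₃ + k₄`. -/
theorem mixed_poisson_eta_mean_var
    {Ω : Type*} [MeasurableSpace Ω] {P : Measure Ω} [IsProbabilityMeasure P]
    (Λ : Ω → ℝ≥0) (Y : Ω → ℕ) (hΛ : Measurable Λ) (hY : Measurable Y)
    (hmom : MemLp (fun ω => (Λ ω : ℝ)) 4 P)
    (hμpos : 0 < ∫ ω, (Λ ω : ℝ) ∂P)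
    (hcond : ∀ᵐ ω ∂P, condDistrib Y Λ P (Λ ω) = poissonMeasure (Λ ω)) :
    (∫ ω, (((Y ω : ℝ) - ∫ ω', (Λ ω' : ℝ) ∂P) ^ 2 - (Y ω : ℝ)) ∂P)
        = variance (fun ω => (Λ ω : ℝ)) P ∧
    variance (fun ω => ((Y ω : ℝ) - ∫ ω', (Λ ω' : ℝ) ∂P) ^ 2 - (Y ω : ℝ)) P
        = 2 * (∫ ω, (Λ ω : ℝ) ∂P) ^ 2
          + 4 * (∫ ω, (Λ ω : ℝ) ∂P) * variance (fun ω => (Λ ω : ℝ)) P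
          + 2 * (variance (fun ω => (Λ ω : ℝ)) P) ^ 2
          + 2 * variance (fun ω => (Λ ω : ℝ)) P
          + 4 * cum3 (fun ω => (Λ ω : ℝ)) P
          + cum4 (fun ω => (Λ ω : ℝ)) P :=
  mixed_poisson_eta_mean_var_general Λ Y hΛ hY hmom hcond
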